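/- arXiv:math/0011237 — 3 statements merged into one kernel-verified Lean document; each statement's English description precedes it below -/
import Mathlib

section
/- Let H be a complex Hilbert space, let A and B be bounded self-adjoint operators on H, let k be a natural number with rank(B) ≤ k (i.e., the range of B has finite dimension at most k), and let μ > 0 be such that ⟨(A+B)u, u⟩ ≥ μ·‖u‖² for every u ∈ H. Then every subspace V ⊆ H with the property that ⟨Au, u⟩ < μ·‖u‖² for every nonzero u ∈ V satisfies dim V ≤ k. In particular, the number of eigenvalues of A not exceeding μ − ε (counted with multiplicity) is at most k, for every ε > 0. -/
open InnerProductSpace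

/-- Abstract eigenvalue-counting lemma (Reed–Simon): if `A`, `B` are bounded
self-adjoint operators on a complex Hilbert space, `rank B ≤ k`, and
`⟨(A+B)u, u⟩ ≥ μ‖u‖²` for all `u` with `μ > 0`, then any subspace `V` on which
`⟨Au, u⟩ < μ‖u‖²` for all nonzero `u` has dimension at most `k`. -/
theorem rank_le_of_quadratic_form_estimate
    {H : Type*} [NormedAddCommGroup H] [InnerProductSpace ℂ H] [CompleteSpace H]
    (A B : H →L[ℂ] H) (hA : IsSelfAdjoint A) (hB : IsSelfAdjoint B)
    (k : ℕ) (hrank : Module.rank ℂ (LinearMap.range (B : H →ₗ[ℂ] H)) ≤ k)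
    (μ : ℝ) (hμ : 0 < μ)
    (hbound : ∀ u : H, μ * ‖u‖ ^ 2 ≤ (⟪(A + B) u, u⟫_ℂ).re)
    (V : Submodule ℂ H)
    (hV : ∀ u ∈ V, u ≠ 0 → (⟪A u, u⟫_ℂ).re < μ * ‖u‖ ^ 2) :
    Module.rank ℂ V ≤ k := by
  -- Consider B restricted to V.
  set f : V →ₗ[ℂ] H := (B : H →ₗ[ℂ] H).comp V.subtype with hf
  -- f is injective: any u ∈ V with B u = 0 must be 0.
  have hinj : Function.Injective f := by
    rw [← LinearMap.ker_eq_bot, LinearMap.ker_eq_bot']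
    intro u hu
    by_contra hne
    have hu' : B (u : H) = 0 := hu
    have h1 := hbound (u : H)
    have h2 : ((A + B) (u : H)) = A (u : H) := by
      simp [hu']
    rw [h2] at h1
    have h3 := hV u u.2 (fun h => hne (Subtype.ext h))
    linarith
  calc Module.rank ℂ V = Module.rank ℂ (LinearMap.range f) :=
        (rank_range_of_injective f hinj).symm
    _ ≤ Module.rank ℂ (LinearMap.range (B : H →ₗ[ℂ] H)) := by
        apply Submodule.rank_mono
        rintro x ⟨u, rfl⟩
        exact ⟨u, rfl⟩
    _ ≤ k := hrank
end

section
/- Let f : ℝ → ℂ be a twice continuously differentiable function satisfying the harmonic-oscillator ground-state equation f''(t) = (t² − 1)·f(t) for all t ∈ ℝ, and assume f is square-integrable on ℝ (f ∈ L²(ℝ)). Then there exists a constant c ∈ ℂ such that f(t) = c·exp(−t²/2) for all t ∈ ℝ. In other words, the L²-kernel of the operator −d²/dt² + t² − 1 is one-dimensional, spanned by exp(−t²/2). -/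
open MeasureTheory Filter

/-!
The operator factors as `-d²/dt² + t² - 1 = (-d/dt + t) (d/dt + t)`, so `g := f' + t f` solves
`g' = t g`, i.e. `g = a e^{t²/2}`. If `a = 0`, then `f' = -t f` and `f` is a multiple of the
Gaussian. Otherwise `(f e^{t²/2})' = a e^{t²}`, which forces `|f t| ≳ e^{t²/2 - 2t}` as `t → ∞`,
so `f` is not square-integrable.
-/

lemma hasDerivAt_cexp_mul_sq_div_two (c : ℂ) (t : ℝ) :
    HasDerivAt (fun s : ℝ => Complex.exp (c * (s : ℂ) ^ 2 / 2))
      (c * t * Complex.exp (c * (t : ℂ) ^ 2 / 2)) t := by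
  convert ((((hasDerivAt_pow 2 (t : ℂ)).comp_ofReal).const_mul c).div_const 2).cexp using 1
  ring

lemma eq_mul_cexp_of_hasDerivAt_eq_mul {u : ℝ → ℂ} (c : ℂ)
    (hu : ∀ t : ℝ, HasDerivAt u (c * t * u t) t) (t : ℝ) :
    u t = u 0 * Complex.exp (c * (t : ℂ) ^ 2 / 2) := by
  have hconst : ∀ s : ℝ,
      HasDerivAt (fun s : ℝ => u s * Complex.exp (-c * (s : ℂ) ^ 2 / 2)) 0 s := fun s =>
    ((hu s).mul (hasDerivAt_cexp_mul_sq_div_two (-c) s)).congr_deriv (by ring)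
  have h : u t * Complex.exp (-c * (t : ℂ) ^ 2 / 2) = u 0 := by
    simpa using is_const_of_deriv_eq_zero (fun s => (hconst s).differentiableAt)
      (fun s => (hconst s).deriv) t 0
  rw [← h, mul_assoc, ← Complex.exp_add]
  ring_nf
  simp

lemma tendsto_mul_exp_neg_sq_div_two_of_hasDerivAt {p : ℝ → ℝ}
    (hp : ∀ t : ℝ, HasDerivAt p (Real.exp (t ^ 2)) t) :
    Tendsto (fun t => p t * Real.exp (-t ^ 2 / 2)) atTop atTop := by
  have hq : ∀ t : ℝ, HasDerivAt (fun t => p t - Real.exp (t ^ 2 - 2 * t))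
      (Real.exp (t ^ 2) - Real.exp (t ^ 2 - 2 * t) * (2 * t - 2)) t := fun t => by
    refine (hp t).sub
      (((hasDerivAt_pow 2 t).sub ((hasDerivAt_id t).const_mul 2)).exp.congr_deriv ?_)
    simp only [Pi.sub_apply, id]
    ring
  -- `(t² - 2t)' = 2t - 2 ≤ exp (2t)`, so `exp (t² - 2t)` grows no faster than `p`
  have hmono : Monotone fun t => p t - Real.exp (t ^ 2 - 2 * t) := by
    refine monotone_of_deriv_nonneg (fun t => (hq t).differentiableAt) fun t => ?_
    rw [(hq t).deriv]
    have : Real.exp (t ^ 2) = Real.exp (t ^ 2 - 2 * t) * Real.exp (2 * t) := by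
      rw [← Real.exp_add]; ring_nf
    nlinarith [Real.add_one_le_exp (2 * t), Real.exp_pos (t ^ 2 - 2 * t)]
  set C := p 0 - 1
  refine tendsto_atTop_mono' atTop ?_ (tendsto_atTop_add_const_right atTop (-7 - |C|) tendsto_id)
  filter_upwards [eventually_ge_atTop 0] with t ht
  have hpt : Real.exp (t ^ 2 - 2 * t) + C ≤ p t := by
    have := hmono ht
    norm_num at this
    linarith
  have hdecay : Real.exp (-t ^ 2 / 2) ≤ 1 := Real.exp_le_one_iff.mpr (by nlinarith)
  have hsplit :
      Real.exp (t ^ 2 - 2 * t) * Real.exp (-t ^ 2 / 2) = Real.exp (t ^ 2 / 2 - 2 * t) := by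
    rw [← Real.exp_add]; ring_nf
  have hE := Real.exp_pos (-t ^ 2 / 2)
  calc t + (-7 - |C|) ≤ Real.exp (t ^ 2 / 2 - 2 * t) + C * Real.exp (-t ^ 2 / 2) := by
        nlinarith [Real.add_one_le_exp (t ^ 2 / 2 - 2 * t), sq_nonneg (t - 3),
          mul_nonneg (by linarith [neg_abs_le C] : 0 ≤ C + |C|) hE.le,
          mul_nonneg (abs_nonneg C) (sub_nonneg.mpr hdecay)]
    _ ≤ p t * Real.exp (-t ^ 2 / 2) := by
        rw [← hsplit]; nlinarith

lemma tendsto_norm_atTop_of_hasDerivAt_mul_cexp {g : ℝ → ℂ} {a : ℂ} (ha : a ≠ 0)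
    (hg : ∀ t : ℝ, HasDerivAt (fun s : ℝ => g s * Complex.exp ((s : ℂ) ^ 2 / 2))
      (a * Complex.exp ((t : ℂ) ^ 2)) t) :
    Tendsto (fun t => ‖g t‖) atTop atTop := by
  set p : ℝ → ℝ := fun t => (g t * Complex.exp ((t : ℂ) ^ 2 / 2) / a).re
  have hp : ∀ t : ℝ, HasDerivAt p (Real.exp (t ^ 2)) t := fun t => by
    refine (Complex.reCLM.hasFDerivAt.comp_hasDerivAt t ((hg t).div_const a)).congr_deriv ?_
    simp [ha, ← Complex.ofReal_pow, ← Complex.ofReal_exp]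
  have hle : ∀ t : ℝ, ‖a‖ * (p t * Real.exp (-t ^ 2 / 2)) ≤ ‖g t‖ := fun t => by
    have hre : ‖a‖ * p t ≤ ‖g t‖ * Real.exp (t ^ 2 / 2) := by
      have := Complex.re_le_norm (g t * Complex.exp ((t : ℂ) ^ 2 / 2) / a)
      rw [norm_div, norm_mul, Complex.norm_exp, le_div_iff₀ (norm_pos_iff.mpr ha)] at this
      simpa [p, ← Complex.ofReal_pow, mul_comm] using this
    have hinv : Real.exp (t ^ 2 / 2) * Real.exp (-t ^ 2 / 2) = 1 := by
      rw [← Real.exp_add]; ring_nf; exact Real.exp_zero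
    calc ‖a‖ * (p t * Real.exp (-t ^ 2 / 2))
      _ ≤ ‖g t‖ * Real.exp (t ^ 2 / 2) * Real.exp (-t ^ 2 / 2) := by
        rw [← mul_assoc]; gcongr
      _ = ‖g t‖ := by rw [mul_assoc, hinv, mul_one]
  exact tendsto_atTop_mono hle
    ((tendsto_mul_exp_neg_sq_div_two_of_hasDerivAt hp).const_mul_atTop (norm_pos_iff.mpr ha))

lemma not_tendsto_norm_atTop_of_memLp {E : Type*} [NormedAddCommGroup E] {f : ℝ → E}
    {p : ENNReal} (hf : MemLp f p volume) (hp0 : p ≠ 0) (hp : p ≠ ⊤) :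
    ¬ Tendsto (fun t => ‖f t‖) atTop atTop := by
  intro htend
  obtain ⟨T, hT⟩ := eventually_atTop.mp (htend.eventually_ge_atTop 1)
  have hint : IntegrableOn (fun _ : ℝ => (1 : ℝ)) (Set.Ici T) :=
    (hf.integrable_norm_rpow hp0 hp).integrableOn.mono' aestronglyMeasurable_const (by
      filter_upwards [ae_restrict_mem measurableSet_Ici] with t ht
      simpa using Real.one_le_rpow (hT t ht) ENNReal.toReal_nonneg)
  simp [Real.volume_Ici] at hint

/-- The `L²`-kernel of the harmonic oscillator `-d²/dt² + t² - 1` is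
one-dimensional, spanned by the Gaussian `exp(-t²/2)`: any `C²` square-integrable
solution of `f'' = (t² - 1) f` is a constant multiple of `exp(-t²/2)`. -/
theorem groundState_unique
    (f : ℝ → ℂ) (hf : ContDiff ℝ 2 f)
    (hode : ∀ t : ℝ, deriv (deriv f) t = ((t : ℂ) ^ 2 - 1) * f t)
    (hL2 : MemLp f 2 volume) :
    ∃ c : ℂ, ∀ t : ℝ, f t = c * Complex.exp (-(t : ℂ) ^ 2 / 2) := by
  have hf' : ∀ t, HasDerivAt f (deriv f t) t := fun t =>
    (hf.differentiable (by norm_num) t).hasDerivAt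
  have hf'' : ∀ t, HasDerivAt (deriv f) (deriv (deriv f) t) t := fun t =>
    ((hf.iterate_deriv' 1 1).differentiable one_ne_zero t).hasDerivAt
  have hA : ∀ t : ℝ, HasDerivAt (fun s : ℝ => deriv f s + s * f s)
      (1 * t * (deriv f t + t * f t)) t := fun t =>
    ((hf'' t).add (Complex.ofRealCLM.hasDerivAt.mul (hf' t))).congr_deriv (by
      simp only [hode, Complex.ofRealCLM_apply, Complex.ofReal_one]; ring)
  obtain ⟨a, hAf⟩ :
      ∃ a : ℂ, ∀ t : ℝ, deriv f t + t * f t = a * Complex.exp ((t : ℂ) ^ 2 / 2) :=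
    ⟨_, fun t => by simpa using eq_mul_cexp_of_hasDerivAt_eq_mul 1 hA t⟩
  by_cases ha : a = 0
  · have hf_decay : ∀ t : ℝ, HasDerivAt f (-1 * t * f t) t := fun t =>
      (hf' t).congr_deriv (by linear_combination hAf t + Complex.exp ((t : ℂ) ^ 2 / 2) * ha)
    exact ⟨f 0, fun t => by rw [eq_mul_cexp_of_hasDerivAt_eq_mul (-1) hf_decay t]; ring_nf⟩
  · refine absurd (tendsto_norm_atTop_of_hasDerivAt_mul_cexp ha fun t => ?_)
      (not_tendsto_norm_atTop_of_memLp hL2 two_ne_zero ENNReal.ofNat_ne_top)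
    have hG := hasDerivAt_cexp_mul_sq_div_two 1 t
    simp only [one_mul] at hG
    have hsq : Complex.exp ((t : ℂ) ^ 2 / 2) * Complex.exp ((t : ℂ) ^ 2 / 2)
        = Complex.exp ((t : ℂ) ^ 2) := by
      rw [← Complex.exp_add]; ring_nf
    exact ((hf' t).mul hG).congr_deriv
      (by linear_combination Complex.exp ((t : ℂ) ^ 2 / 2) * hAf t + a * hsq)
end

section
/- Let f : ℝ → ℂ be a twice continuously differentiable function satisfying f''(t) = (t² + 1)·f(t) for all t ∈ ℝ, and assume f is square-integrable on ℝ (f ∈ L²(ℝ)). Then f is identically zero. In other words, the L²-kernel of the operator −d²/dt² + t² + 1 is trivial. -/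
/-!
`G = ‖f‖²` is integrable, and convex because `G'' = 2a‖f‖² + 2‖f'‖² ≥ 0`. An integrable function
with monotone derivative has `G' ≡ 0`: if `G'(t₀) > 0`, the tangent line at `t₀` forces
`G → ∞` at `+∞`, and `G'(t₀) < 0` is the mirror case. Hence `G'' ≡ 0`, so `a‖f‖² ≡ 0`.
-/

open MeasureTheory Set Filter

open scoped RealInnerProductSpace

theorem MeasureTheory.Integrable.not_tendsto_atTop {G : ℝ → ℝ} (hG : Integrable G) :
    ¬ Tendsto G atTop atTop := by
  intro hlim
  obtain ⟨a, ha⟩ := eventually_atTop.mp (hlim.eventually_ge_atTop 1)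
  have hsub : Ici a ⊆ {t | 1 ≤ ‖G t‖} := fun t ht => (ha t ht).trans (le_abs_self _)
  have := (measure_mono hsub).trans_lt (hG.measure_norm_ge_lt_top one_pos)
  simp [Real.volume_Ici] at this

theorem deriv_nonpos_of_integrable_of_monotone_deriv {G G' : ℝ → ℝ}
    (hG : ∀ t, HasDerivAt G (G' t) t) (hG' : Monotone G') (hint : Integrable G) (t₀ : ℝ) :
    G' t₀ ≤ 0 := by
  by_contra! hpos
  have tangent : ∀ t ≥ t₀, G t₀ + G' t₀ * (t - t₀) ≤ G t := by
    intro t ht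
    have := (convex_Ici t₀).mul_sub_le_image_sub_of_le_deriv
      (fun x _ => (hG x).continuousAt.continuousWithinAt)
      (fun x _ => (hG x).differentiableAt.differentiableWithinAt)
      (fun x hx => by
        rw [interior_Ici] at hx
        exact (hG x).deriv ▸ hG' (le_of_lt hx))
      t₀ self_mem_Ici t ht ht
    linarith
  refine hint.not_tendsto_atTop (tendsto_atTop_mono' _ ((eventually_ge_atTop t₀).mono tangent) ?_)
  exact tendsto_atTop_add_const_left _ _
    ((tendsto_atTop_add_const_right _ _ tendsto_id).const_mul_atTop hpos)

theorem deriv_eq_zero_of_integrable_of_monotone_deriv {G G' : ℝ → ℝ}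
    (hG : ∀ t, HasDerivAt G (G' t) t) (hG' : Monotone G') (hint : Integrable G) (t₀ : ℝ) :
    G' t₀ = 0 := by
  have hGneg : ∀ t, HasDerivAt (fun s => G (-s)) (-G' (-t)) t := fun t => by
    simpa [Function.comp_def] using (hG (-t)).scomp t (hasDerivAt_neg t)
  have := deriv_nonpos_of_integrable_of_monotone_deriv hGneg
    (fun s t hst => neg_le_neg (hG' (neg_le_neg hst))) hint.comp_neg (-t₀)
  exact le_antisymm (deriv_nonpos_of_integrable_of_monotone_deriv hG hG' hint t₀)
    (by simpa using this)

theorem eq_zero_of_memLp_two_of_second_deriv_pos_smul {E : Type*} [NormedAddCommGroup E]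
    [InnerProductSpace ℝ E] {f f' : ℝ → E} {a : ℝ → ℝ}
    (hf : ∀ t, HasDerivAt f (f' t) t) (hf' : ∀ t, HasDerivAt f' (a t • f t) t)
    (ha : ∀ t, 0 < a t) (hL2 : MemLp f 2 volume) (t : ℝ) : f t = 0 := by
  have hG (t : ℝ) : HasDerivAt (‖f ·‖ ^ 2) (2 * ⟪f t, f' t⟫) t := (hf t).norm_sq
  have hG' (t : ℝ) : HasDerivAt (fun s => 2 * ⟪f s, f' s⟫)
      (2 * (a t * ‖f t‖ ^ 2 + ‖f' t‖ ^ 2)) t := by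
    refine (((hf t).inner ℝ (hf' t)).const_mul 2).congr_deriv ?_
    rw [inner_smul_right, real_inner_self_eq_norm_sq, real_inner_self_eq_norm_sq]
  have hmono : Monotone (fun s => 2 * ⟪f s, f' s⟫) :=
    monotone_of_deriv_nonneg (fun s => (hG' s).differentiableAt) fun s => by
      rw [(hG' s).deriv]; have := ha s; positivity
  have hint : Integrable (‖f ·‖ ^ 2) := (memLp_two_iff_integrable_sq_norm hL2.1).mp hL2
  have hzero : (fun s => 2 * ⟪f s, f' s⟫) = 0 :=
    funext (deriv_eq_zero_of_integrable_of_monotone_deriv hG hmono hint)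
  have hsum : 2 * (a t * ‖f t‖ ^ 2 + ‖f' t‖ ^ 2) = 0 :=
    (hG' t).unique (hzero ▸ hasDerivAt_const t 0)
  have hfa : a t * ‖f t‖ ^ 2 = 0 := by
    have := ha t
    exact le_antisymm (by nlinarith [sq_nonneg ‖f' t‖]) (by positivity)
  simpa [(ha t).ne'] using hfa

/-- The `L²`-kernel of `-d²/dt² + t² + 1` is trivial: any `C²` square-integrable
solution of `f'' = (t² + 1) f` vanishes identically. -/
theorem no_L2_solution
    (f : ℝ → ℂ) (hf : ContDiff ℝ 2 f)
    (hode : ∀ t : ℝ, deriv (deriv f) t = ((t : ℂ) ^ 2 + 1) * f t)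
    (hL2 : MemLp f 2 volume) :
    ∀ t : ℝ, f t = 0 := by
  refine eq_zero_of_memLp_two_of_second_deriv_pos_smul (a := fun t => t ^ 2 + 1)
    (fun t => (hf.differentiable two_ne_zero t).hasDerivAt) (fun t => ?_)
    (fun t => by positivity) hL2
  convert (hf.differentiable_deriv_two t).hasDerivAt using 1
  simp [hode]
end
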